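/- arXiv:2308.09548 — 4 statements merged into one kernel-verified Lean document; each statement's English description precedes it below -/
import Mathlib

section
/- Let λ̃_1 ≥ λ̃_2 ≥ ... ≥ λ̃_p > 0 be a nonincreasing positive sequence, and define the sorted-weighted norm ‖β‖_{λ̃*} = Σ_{i=1}^p λ̃_i β_{i*}, where β_{i*} is the i-th largest absolute value among entries of β. If β ∈ ℝ^p has at most k nonzero entries and u = β̂ − β for any β̂ ∈ ℝ^p, then ‖β‖_{λ̃*} − ‖β̂‖_{λ̃*} ≤ (Σ_{i=1}^k λ̃_i²)^{1/2} ‖u‖_2 − Σ_{i=k+1}^p λ̃_i u_{i*}. -/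
/-!
Sort the coordinates by `|β|`, so that `β` vanishes past position `k`. Every arrangement of the
entries of `|β̂|` has weighted sum at most `‖β̂‖_{λ̃*}` (rearrangement inequality); use the one
that keeps the first `k` coordinates in place and sorts the remaining ones decreasingly. On the
first `k` coordinates `|β| - |β̂| ≤ |u|`, and Cauchy–Schwarz gives the `ℓ²` term. On the others
`β̂ = u`, and the `j`-th largest of those `p - k` values of `|u|` is at least `u_{(k+j)*}`.
-/

/-- `descSort f i` is the `(i+1)`-th largest value of `f`. -/
noncomputable def descSort {n : ℕ} (f : Fin n → ℝ) : Fin n → ℝ :=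
  fun i => f (Tuple.sort f i.rev)

open Finset

namespace SortedNorm

variable {n : ℕ}

noncomputable def descSortPerm (f : Fin n → ℝ) : Equiv.Perm (Fin n) :=
  Fin.revPerm.trans (Tuple.sort f)

noncomputable def sortedNorm (w x : Fin n → ℝ) : ℝ :=
  ∑ i, w i * descSort (fun j => |x j|) i

lemma descSort_eq (f : Fin n → ℝ) (i : Fin n) : descSort f i = f (descSortPerm f i) := rfl

lemma descSort_antitone (f : Fin n → ℝ) : Antitone (descSort f) :=
  fun _ _ hij => Tuple.monotone_sort f (Fin.rev_le_rev.2 hij)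

lemma descSort_comp_perm (f : Fin n → ℝ) (σ : Equiv.Perm (Fin n)) :
    descSort (f ∘ σ) = descSort f :=
  funext fun i => congrFun (Tuple.comp_perm_comp_sort_eq_comp_sort (f := f) (σ := σ)) i.rev

lemma sortedNorm_comp_perm (w x : Fin n → ℝ) (σ : Equiv.Perm (Fin n)) :
    sortedNorm w (x ∘ σ) = sortedNorm w x := by
  simp only [sortedNorm]
  rw [← descSort_comp_perm (fun j => |x j|) σ]
  rfl

lemma card_filter_lt_descSort (f : Fin n → ℝ) (c : ℝ) :
    #{i | c < descSort f i} = #{j | c < f j} := by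
  rw [card_filter, card_filter]
  exact Equiv.sum_comp (descSortPerm f) fun j => if c < f j then 1 else 0

lemma card_filter_descSort_lt_le (f : Fin n → ℝ) (i : Fin n) :
    #{j | descSort f i < f j} ≤ i := by
  rw [← card_filter_lt_descSort, ← Fin.card_Iio i]
  refine card_le_card fun i' hi' => ?_
  simp only [mem_filter, mem_univ, true_and] at hi'
  simpa using lt_of_not_ge fun h => (descSort_antitone f h).not_gt hi'

lemma descSort_le_of_card_filter_le {f : Fin n → ℝ} {i : Fin n} {c : ℝ}
    (h : #{j | c < f j} ≤ i) : descSort f i ≤ c := by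
  by_contra! hc
  have : Iic i ⊆ ({i' | c < descSort f i'} : Finset _) := fun i' hi' => by
    simpa using hc.trans_le (descSort_antitone f (mem_Iic.1 hi'))
  have := (card_le_card this).trans ((card_filter_lt_descSort f c).trans_le h)
  simp at this

lemma descSort_abs_eq_zero {x : Fin n → ℝ} {k : ℕ} (hx : #{j | x j ≠ 0} ≤ k) {i : Fin n}
    (hi : k ≤ i) : descSort (fun j => |x j|) i = 0 :=
  le_antisymm (descSort_le_of_card_filter_le (by simpa using hx.trans hi)) (abs_nonneg _)

lemma card_filter_univ_add {k m : ℕ} (P : Fin (k + m) → Prop) [DecidablePred P] :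
    #{i | P i} = #{i : Fin k | P (Fin.castAdd m i)} + #{j : Fin m | P (Fin.natAdd k j)} := by
  simp only [card_filter, Fin.sum_univ_add]

lemma descSort_natAdd_le {k m : ℕ} (f : Fin (k + m) → ℝ) (j : Fin m) :
    descSort f (Fin.natAdd k j) ≤ descSort (f ∘ Fin.natAdd k) j := by
  apply descSort_le_of_card_filter_le
  rw [card_filter_univ_add, Fin.val_natAdd]
  exact add_le_add ((card_filter_le _ _).trans_eq (by simp)) (card_filter_descSort_lt_le _ j)

lemma sum_mul_comp_perm_le_sum_mul_descSort {w : Fin n → ℝ} (hw : Antitone w)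
    (f : Fin n → ℝ) (π : Equiv.Perm (Fin n)) :
    ∑ i, w i * f (π i) ≤ ∑ i, w i * descSort f i := by
  simpa [descSort_eq] using (hw.monovary (descSort_antitone f)).sum_smul_comp_perm_le_sum_smul
    (σ := π.trans (descSortPerm f).symm)

lemma sum_castAdd_add_sum_natAdd_descSort_le {k m : ℕ} {w : Fin (k + m) → ℝ} (hw : Antitone w)
    (f : Fin (k + m) → ℝ) :
    ∑ i : Fin k, w (Fin.castAdd m i) * f (Fin.castAdd m i)
      + ∑ j : Fin m, w (Fin.natAdd k j) * descSort (f ∘ Fin.natAdd k) j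
      ≤ ∑ i, w i * descSort f i := by
  let π : Equiv.Perm (Fin (k + m)) :=
    finSumFinEquiv.permCongr ((Equiv.refl _).sumCongr (descSortPerm (f ∘ Fin.natAdd k)))
  convert sum_mul_comp_perm_le_sum_mul_descSort hw f π using 1
  simp [π, Fin.sum_univ_add, descSort_eq, Equiv.permCongr_apply]

lemma sum_filter_val_lt {k m : ℕ} (f : Fin (k + m) → ℝ) :
    ∑ i ∈ univ.filter (fun i : Fin (k + m) => i.val < k), f i
      = ∑ i : Fin k, f (Fin.castAdd m i) := by
  simp [sum_filter, Fin.sum_univ_add]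

lemma sum_filter_le_val {k m : ℕ} (f : Fin (k + m) → ℝ) :
    ∑ i ∈ univ.filter (fun i : Fin (k + m) => k ≤ i.val), f i
      = ∑ j : Fin m, f (Fin.natAdd k j) := by
  simp [sum_filter, Fin.sum_univ_add, fun i : Fin k => not_le.2 i.is_lt]

lemma sum_castAdd_sq_le {k m : ℕ} (f : Fin (k + m) → ℝ) :
    ∑ i : Fin k, f (Fin.castAdd m i) ^ 2 ≤ ∑ i, f i ^ 2 := by
  rw [Fin.sum_univ_add]
  exact le_add_of_nonneg_right (sum_nonneg fun _ _ => sq_nonneg _)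

lemma sum_abs_sub_sortedNorm_le_of_natAdd_eq_zero {k m : ℕ} {w : Fin (k + m) → ℝ}
    (hw : Antitone w) (hw0 : ∀ i, 0 ≤ w i) {x : Fin (k + m) → ℝ}
    (hx : ∀ j, x (Fin.natAdd k j) = 0) (y : Fin (k + m) → ℝ) :
    ∑ i : Fin k, w (Fin.castAdd m i) * |x (Fin.castAdd m i)| - sortedNorm w y
      ≤ √(∑ i : Fin k, w (Fin.castAdd m i) ^ 2) * √(∑ i, (y - x) i ^ 2)
        - ∑ j : Fin m, w (Fin.natAdd k j) * descSort (fun i => |(y - x) i|) (Fin.natAdd k j) := by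
  set u := y - x
  have hy_tail : (fun i => |y i|) ∘ Fin.natAdd k = (fun i => |u i|) ∘ Fin.natAdd k := by
    funext j; simp [u, hx]
  have hlow := sum_castAdd_add_sum_natAdd_descSort_le hw fun i => |y i|
  rw [hy_tail] at hlow
  have hhead : ∑ i : Fin k, w (Fin.castAdd m i) * |x (Fin.castAdd m i)|
      ≤ ∑ i : Fin k, w (Fin.castAdd m i) * |y (Fin.castAdd m i)|
        + ∑ i : Fin k, w (Fin.castAdd m i) * |u (Fin.castAdd m i)| := by
    rw [← sum_add_distrib]
    refine sum_le_sum fun i _ => ?_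
    rw [← mul_add, show u _ = y _ - x _ from rfl, abs_sub_comm]
    have := abs_sub_abs_le_abs_sub (x (Fin.castAdd m i)) (y (Fin.castAdd m i))
    exact mul_le_mul_of_nonneg_left (by linarith) (hw0 _)
  have hcs : ∑ i : Fin k, w (Fin.castAdd m i) * |u (Fin.castAdd m i)|
      ≤ √(∑ i : Fin k, w (Fin.castAdd m i) ^ 2) * √(∑ i, u i ^ 2) := by
    refine (Real.sum_mul_le_sqrt_mul_sqrt _ _ _).trans ?_
    gcongr
    simpa only [sq_abs] using sum_castAdd_sq_le u
  have htail : ∑ j : Fin m, w (Fin.natAdd k j) * descSort (fun i => |u i|) (Fin.natAdd k j)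
      ≤ ∑ j : Fin m, w (Fin.natAdd k j) * descSort ((fun i => |u i|) ∘ Fin.natAdd k) j :=
    sum_le_sum fun j _ => mul_le_mul_of_nonneg_left (descSort_natAdd_le _ j) (hw0 _)
  unfold sortedNorm
  linarith

end SortedNorm

open SortedNorm in
open Finset in
theorem stmt3_general (p k : ℕ) (hkp : k ≤ p)
    (tlam : Fin p → ℝ) (hpos : ∀ i, 0 < tlam i)
    (hanti : ∀ i j : Fin p, i ≤ j → tlam j ≤ tlam i)
    (β βhat : Fin p → ℝ)
    (hsparse : (Finset.univ.filter (fun i => β i ≠ 0)).card ≤ k)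
    (u : Fin p → ℝ) (hu : u = βhat - β) :
    ∑ i, tlam i * descSort (fun j => |β j|) i
      - ∑ i, tlam i * descSort (fun j => |βhat j|) i
    ≤ Real.sqrt (∑ i ∈ Finset.univ.filter (fun i : Fin p => i.val < k), (tlam i)^2)
        * Real.sqrt (∑ i, (u i)^2)
      - ∑ i ∈ Finset.univ.filter (fun i : Fin p => k ≤ i.val),
          tlam i * descSort (fun j => |u j|) i := by
  obtain ⟨m, rfl⟩ := Nat.exists_eq_add_of_le hkp
  subst hu
  set τ := descSortPerm fun j => |β j|
  have hβτ_tail : ∀ j : Fin m, β (τ (Fin.natAdd k j)) = 0 := fun j =>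
    abs_eq_zero.1 (descSort_abs_eq_zero hsparse (by simp))
  have hβτ_norm : ∑ i : Fin k, tlam (Fin.castAdd m i) * |(β ∘ τ) (Fin.castAdd m i)|
      = sortedNorm tlam β := by
    simp [sortedNorm, descSort_eq, Fin.sum_univ_add, τ, hβτ_tail]
  have key := sum_abs_sub_sortedNorm_le_of_natAdd_eq_zero hanti (fun i => (hpos i).le)
    (x := β ∘ τ) hβτ_tail (βhat ∘ τ)
  have hsq : ∑ i, ((βhat - β) ∘ τ) i ^ 2 = ∑ i, (βhat - β) i ^ 2 :=
    Equiv.sum_comp τ fun i => (βhat - β) i ^ 2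
  have hdesc : descSort (fun i => |((βhat - β) ∘ τ) i|) = descSort fun i => |(βhat - β) i| :=
    descSort_comp_perm (fun i => |(βhat - β) i|) τ
  rw [hβτ_norm, sortedNorm_comp_perm, ← Pi.sub_comp, hsq, hdesc] at key
  rwa [sum_filter_val_lt, sum_filter_le_val]

open Finset in
/-- Lemma on the sorted weighted (SLOPE-type) norm: if `β` has at most `k` nonzero
entries and `u = β̂ - β`, then
`‖β‖_{λ̃*} - ‖β̂‖_{λ̃*} ≤ √(∑_{i≤k} λ̃ i²) ‖u‖₂ - ∑_{i>k} λ̃ i u_{i*}`. -/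
theorem stmt3 (p k : ℕ) (hk1 : 1 ≤ k) (hkp : k ≤ p)
    (tlam : Fin p → ℝ) (hpos : ∀ i, 0 < tlam i)
    (hanti : ∀ i j : Fin p, i ≤ j → tlam j ≤ tlam i)
    (β βhat : Fin p → ℝ)
    (hsparse : (Finset.univ.filter (fun i => β i ≠ 0)).card ≤ k)
    (u : Fin p → ℝ) (hu : u = βhat - β) :
    ∑ i, tlam i * descSort (fun j => |β j|) i
      - ∑ i, tlam i * descSort (fun j => |βhat j|) i
    ≤ Real.sqrt (∑ i ∈ Finset.univ.filter (fun i : Fin p => i.val < k), (tlam i)^2)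
        * Real.sqrt (∑ i, (u i)^2)
      - ∑ i ∈ Finset.univ.filter (fun i : Fin p => k ≤ i.val),
          tlam i * descSort (fun j => |u j|) i :=
  stmt3_general p k hkp tlam hpos hanti β βhat hsparse u hu
end

section
/- Let h: ℝ^p → ℝ be a convex function and let β̂ minimize the function β ↦ ‖y − Xβ‖_n² + h(β) over ℝ^p, where y = Xβ* + ξ and ‖v‖_n² = (1/n)‖v‖_2². Then ‖X(β̂ − β*)‖_n² ≤ (1/n) ξᵀX(β̂ − β*) + (1/2)(h(β*) − h(β̂)). -/
open Matrix
/-- Basic inequality for penalized least squares with a convex penalty. -/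
theorem stmt4 (n p : ℕ) (hn : 0 < n) (X : Matrix (Fin n) (Fin p) ℝ)
    (βstar : Fin p → ℝ) (ξ : Fin n → ℝ)
    (h : (Fin p → ℝ) → ℝ) (hconv : ConvexOn ℝ Set.univ h)
    (y : Fin n → ℝ) (hy : y = X.mulVec βstar + ξ)
    (βhat : Fin p → ℝ)
    (hmin : ∀ β : Fin p → ℝ,
      (1/(n:ℝ)) * ∑ i, (y i - X.mulVec βhat i)^2 + h βhat
        ≤ (1/(n:ℝ)) * ∑ i, (y i - X.mulVec β i)^2 + h β) :
    (1/(n:ℝ)) * ∑ i, (X.mulVec (βhat - βstar) i)^2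
      ≤ (1/(n:ℝ)) * (ξ ⬝ᵥ X.mulVec (βhat - βstar))
        + (1/2) * (h βstar - h βhat) := by
  set u : Fin n → ℝ := X.mulVec (βhat - βstar) with hu
  have hupt : ∀ i, u i = X.mulVec βhat i - X.mulVec βstar i := by
    intro i; rw [hu, Matrix.mulVec_sub]; simp
  set A : ℝ := (1/(n:ℝ)) * ∑ i, (u i)^2 with hA
  set C : ℝ := (1/(n:ℝ)) * ∑ i, ξ i * u i with hC
  set D : ℝ := h βstar - h βhat with hD
  have hnpos : (0:ℝ) < (n:ℝ) := by exact_mod_cast hn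
  have hAnn : 0 ≤ A := by
    apply mul_nonneg (by positivity)
    exact Finset.sum_nonneg fun i _ => sq_nonneg _
  -- expansion of sums
  have expand : ∀ a : ℝ, ∑ i, (ξ i - a * u i)^2
      = ∑ i, (ξ i)^2 - 2*a*∑ i, ξ i * u i + a^2 * ∑ i, (u i)^2 := by
    intro a
    rw [Finset.mul_sum, Finset.mul_sum, ← Finset.sum_sub_distrib, ← Finset.sum_add_distrib]
    exact Finset.sum_congr rfl fun i _ => by ring
  have key : ∀ α : ℝ, 0 ≤ α → α < 1 → (1+α) * A ≤ 2*C + D := by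
    intro α hα0 hα1
    set βα : Fin p → ℝ := (1-α) • βstar + α • βhat with hβα
    have hres : ∀ i, y i - X.mulVec βα i = ξ i - α * u i := by
      intro i
      rw [hβα, Matrix.mulVec_add, Matrix.mulVec_smul, Matrix.mulVec_smul, hy, hupt]
      simp [Pi.add_apply, Pi.smul_apply, smul_eq_mul]
      ring
    have hres1 : ∀ i, y i - X.mulVec βhat i = ξ i - 1 * u i := by
      intro i; rw [hy, hupt]; simp; ring
    have hcv : h βα ≤ (1-α) * h βstar + α * h βhat := by
      have := hconv.2 (Set.mem_univ βstar) (Set.mem_univ βhat)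
        (by linarith : (0:ℝ) ≤ 1-α) hα0 (by ring)
      simpa [hβα, smul_eq_mul] using this
    have H := hmin βα
    rw [show (∑ i, (y i - X.mulVec βhat i)^2) = ∑ i, (ξ i - 1 * u i)^2 from
        Finset.sum_congr rfl fun i _ => by rw [hres1],
      show (∑ i, (y i - X.mulVec βα i)^2) = ∑ i, (ξ i - α * u i)^2 from
        Finset.sum_congr rfl fun i _ => by rw [hres],
      expand 1, expand α] at H
    have h2 : (1-α) * ((1+α)*A) ≤ (1-α) * (2*C + D) := by
      rw [hA, hC, hD]
      nlinarith [H, hcv]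
    exact le_of_mul_le_mul_left h2 (by linarith)
  have final : 2*A ≤ 2*C + D := by
    apply le_of_forall_pos_le_add
    intro ε hε
    set α : ℝ := max 0 (1 - ε/(A+1)) with hαdef
    have hα0 : 0 ≤ α := le_max_left _ _
    have hdivpos : 0 < ε/(A+1) := div_pos hε (by linarith)
    have hα1 : α < 1 := max_lt one_pos (by linarith)
    have h1α : 1 - α ≤ ε/(A+1) := by
      have := le_max_right 0 (1 - ε/(A+1)); linarith
    have hk := key α hα0 hα1
    have hsmall : (1-α)*A ≤ ε := by
      calc (1-α)*A ≤ (ε/(A+1))*A := mul_le_mul_of_nonneg_right h1α hAnn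
        _ ≤ ε := by
            rw [div_mul_eq_mul_div, div_le_iff₀ (by linarith : (0:ℝ) < A+1)]
            nlinarith
    linarith
  have hdot : ξ ⬝ᵥ u = ∑ i, ξ i * u i := rfl
  rw [hdot]
  linarith
end

section
/- Define the cones C_SRE(k, c1) = {δ ∈ ℝ^p : ‖δ‖_1 ≤ (1+c1)√k ‖δ‖_2}, C_SGRE(s, c2) = {δ : ‖δ‖_{1,2} ≤ (1+c2)√s ‖δ‖_2} (with ‖δ‖_{1,2} the sum over groups of the group Euclidean norms for a fixed partition into m groups of size d), and C_SSGRE(s, s_0, c_0) = {δ : ‖δ‖_1 + √s_0 ‖δ‖_{1,2} ≤ (2+c_0)√(s s_0) ‖δ‖_2}. Then with c_0 = c1 + c2 one has C_SRE(s s_0, c1) ∩ C_SGRE(s, c2) ⊆ C_SSGRE(s, s_0, c_0), and moreover C_SSGRE(s, s_0, c_0) ⊆ C_SRE(s s_0, 1 + c_0) ∩ C_SGRE(s, 1 + c_0). -/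
/-- ℓ1 norm of a grouped vector. -/
noncomputable def normL1 {m d : ℕ} (δ : Fin m → Fin d → ℝ) : ℝ :=
  ∑ j, ∑ i, |δ j i|

/-- ℓ2 (Euclidean) norm of a grouped vector. -/
noncomputable def normL2 {m d : ℕ} (δ : Fin m → Fin d → ℝ) : ℝ :=
  Real.sqrt (∑ j, ∑ i, (δ j i)^2)

/-- ℓ1,2 group norm: sum over groups of the group ℓ2 norms. -/
noncomputable def normL12 {m d : ℕ} (δ : Fin m → Fin d → ℝ) : ℝ :=
  ∑ j, Real.sqrt (∑ i, (δ j i)^2)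

/-- The cone `C_SRE(k, c1)`. -/
def CSRE (m d k : ℕ) (c1 : ℝ) : Set (Fin m → Fin d → ℝ) :=
  {δ | normL1 δ ≤ (1 + c1) * Real.sqrt k * normL2 δ}

/-- The cone `C_SGRE(s, c2)`. -/
def CSGRE (m d s : ℕ) (c2 : ℝ) : Set (Fin m → Fin d → ℝ) :=
  {δ | normL12 δ ≤ (1 + c2) * Real.sqrt s * normL2 δ}

/-- The cone `C_SSGRE(s, s0, c0)`. -/
def CSSGRE (m d s s0 : ℕ) (c0 : ℝ) : Set (Fin m → Fin d → ℝ) :=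
  {δ | normL1 δ + Real.sqrt s0 * normL12 δ ≤ (2 + c0) * Real.sqrt (s * s0) * normL2 δ}

/-- Relations between the SRE, SGRE and SSGRE cones. -/
theorem stmt5 (m d s s0 : ℕ) (hs : 1 ≤ s) (hsm : s ≤ m) (hs0 : 1 ≤ s0) (hs0d : s0 ≤ d)
    (c1 c2 c0 : ℝ) (hc1 : 0 < c1) (hc2 : 0 < c2) (hc0 : 0 < c0) :
    (CSRE m d (s * s0) c1 ∩ CSGRE m d s c2 ⊆ CSSGRE m d s s0 (c1 + c2))
    ∧ (CSSGRE m d s s0 c0 ⊆ CSRE m d (s * s0) (1 + c0) ∩ CSGRE m d s (1 + c0)) := by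
  have h1nn : ∀ δ : Fin m → Fin d → ℝ, 0 ≤ normL1 δ := fun δ =>
    Finset.sum_nonneg fun j _ => Finset.sum_nonneg fun i _ => abs_nonneg _
  have h12nn : ∀ δ : Fin m → Fin d → ℝ, 0 ≤ normL12 δ := fun δ =>
    Finset.sum_nonneg fun j _ => Real.sqrt_nonneg _
  have hsplit : Real.sqrt ((s : ℝ) * (s0 : ℝ)) = Real.sqrt s * Real.sqrt s0 :=
    Real.sqrt_mul (Nat.cast_nonneg s) _
  have hs0pos : (0:ℝ) < Real.sqrt s0 := Real.sqrt_pos.mpr (by positivity)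
  constructor
  · rintro δ ⟨hA, hB⟩
    simp only [CSRE, CSGRE, Set.mem_setOf_eq] at hA hB
    simp only [CSSGRE, Set.mem_setOf_eq, Nat.cast_mul, hsplit]
    have hB' : Real.sqrt s0 * normL12 δ ≤
        Real.sqrt s0 * ((1 + c2) * Real.sqrt s * normL2 δ) :=
      mul_le_mul_of_nonneg_left hB hs0pos.le
    rw [Nat.cast_mul, hsplit] at hA
    nlinarith [hA, hB']
  · intro δ hδ
    simp only [CSSGRE, Set.mem_setOf_eq, Nat.cast_mul, hsplit] at hδ
    constructor
    · simp only [CSRE, Set.mem_setOf_eq, Nat.cast_mul, hsplit]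
      nlinarith [h12nn δ, hs0pos]
    · simp only [CSGRE, Set.mem_setOf_eq]
      have h : Real.sqrt s0 * normL12 δ ≤
          Real.sqrt s0 * ((1 + (1 + c0)) * Real.sqrt s * normL2 δ) := by
        nlinarith [h1nn δ]
      exact le_of_mul_le_mul_left h hs0pos
end

section
/- Let X ∈ ℝ^{n×p} satisfy the double sparse restricted eigenvalue condition: ‖Xβ‖_2 ≥ θ‖β‖_2 for all β with at most s nonzero groups (out of m groups of size d) and at most s·s_0 nonzero entries total, where θ > 0. Suppose additionally that ‖Xv‖_2 ≤ ‖v‖_2 for every v supported on at most s_0 coordinates within a single group. Then for every β ∈ ℝ^p with W := Σ_{j=1}^m (√s_0 ‖β_{G_j}‖_2 + ‖β_{G_j}‖_1) satisfying W² ≤ (s_0(s−1)/2) θ² ‖β‖_2², it holds that ‖Xβ‖_2² ≥ (θ²/2)‖β‖_2². -/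
/-! Maurey's empirical method. Draw a group `j` with probability `w_j / W`, then `s0` of its
coordinates independently with probabilities `|β_i| / ‖β_{G_j}‖₁`, and let `U` be `W / w_j` times
the average of the vectors `sign(β_i) ‖β_{G_j}‖₁ e_i` drawn. Then `U` lives on one group and at
most `s0` coordinates, `E U = β`, and the variance identity for the inner average gives
`E ‖U‖² ≤ W² / s0`. The average `Z` of `s` independent copies of `U` is sparse enough for the
restricted eigenvalue condition, so `θ² E ‖Z‖² ≤ E ‖X Z‖²`; expanding both sides with the variance
identity and using `‖X U‖ ≤ ‖U‖` yields
`θ² (1 - 1/s) ‖β‖² ≤ W² / (s s0) + (1 - 1/s) ‖X β‖²`, and the bound on `W` finishes.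

Expectations are finite sums: `N` independent draws from weights `ν` on `α` are the tuples
`ω : Fin N → α` weighted by `∏ k, ν (ω k)`. -/

open Finset
open scoped Matrix

section Maurey

variable {α ι : Type*} {N : ℕ}

theorem sum_sum_ite_eq_add_mul (A B : ℝ) :
    ∑ k : Fin N, ∑ k' : Fin N, (if k = k' then A else B) = N * A + ((N : ℝ) ^ 2 - N) * B := by
  have hrow : ∀ k : Fin N, ∑ k' : Fin N, (if k = k' then A else B) = A + (N - 1) * B := fun k => by
    rw [← add_sum_erase _ _ (mem_univ k), if_pos rfl,
      sum_congr rfl fun k' hk' => if_neg (ne_of_mem_erase hk').symm]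
    simp [card_univ, Nat.cast_pred k.pos]
  simp only [hrow, sum_const, card_univ, Fintype.card_fin, nsmul_eq_mul]
  ring

variable (N) in
noncomputable def empiricalMean (f : α → ι → ℝ) (ω : Fin N → α) : ι → ℝ :=
  (N : ℝ)⁻¹ • ∑ k, f (ω k)

theorem mulVec_empiricalMean {κ : Type*} [Fintype ι] (X : Matrix κ ι ℝ) (f : α → ι → ℝ)
    (ω : Fin N → α) : X *ᵥ empiricalMean N f ω = empiricalMean N (fun x => X *ᵥ f x) ω := by
  rw [empiricalMean, empiricalMean, Matrix.mulVec_smul, Matrix.mulVec_sum]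

theorem exists_ne_zero_of_empiricalMean_ne_zero {f : α → ι → ℝ} {ω : Fin N → α} {i : ι}
    (h : empiricalMean N f ω i ≠ 0) : ∃ k, f (ω k) i ≠ 0 := by
  simp only [empiricalMean, Pi.smul_apply, Finset.sum_apply, smul_eq_mul] at h
  obtain ⟨k, -, hk⟩ := exists_ne_zero_of_sum_ne_zero (right_ne_zero_of_mul h)
  exact ⟨k, hk⟩

variable [Fintype α]

theorem sum_prod_mul_prod (ν : α → ℝ) (g : Fin N → α → ℝ) :
    ∑ ω : Fin N → α, (∏ k, ν (ω k)) * ∏ k, g k (ω k) = ∏ k, ∑ x, ν x * g k x := by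
  rw [Fintype.prod_sum]
  simp only [prod_mul_distrib]

variable {ν : α → ℝ}

theorem sum_prod_mul_apply (hν : ∑ x, ν x = 1) (c : α → ℝ) (k : Fin N) :
    ∑ ω : Fin N → α, (∏ t, ν (ω t)) * c (ω k) = ∑ x, ν x * c x := by
  simpa [ite_apply, apply_ite, hν] using sum_prod_mul_prod ν (fun t => if t = k then c else 1)

theorem sum_prod_mul_apply_mul_apply (hν : ∑ x, ν x = 1) (c e : α → ℝ) (k k' : Fin N) :
    ∑ ω : Fin N → α, (∏ t, ν (ω t)) * (c (ω k) * e (ω k')) =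
      if k = k' then ∑ x, ν x * (c x * e x) else (∑ x, ν x * c x) * ∑ x, ν x * e x := by
  split_ifs with hk
  · subst hk
    exact sum_prod_mul_apply hν (fun x => c x * e x) k
  · let g : Fin N → α → ℝ := fun t => if t = k then c else if t = k' then e else 1
    have hprod : ∀ ω : Fin N → α, ∏ t, g t (ω t) = c (ω k) * e (ω k') := fun ω => by
      rw [Fintype.prod_eq_mul k k' hk (fun t ht => by simp [g, ht.1, ht.2])]
      simp [g, Ne.symm hk]
    have hmean : ∏ t, ∑ x, ν x * g t x = (∑ x, ν x * c x) * ∑ x, ν x * e x := by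
      rw [Fintype.prod_eq_mul k k' hk (fun t ht => by simp [g, ht.1, ht.2, hν])]
      simp [g, Ne.symm hk]
    simpa only [hprod, hmean] using sum_prod_mul_prod ν g

theorem sum_prod_mul_sum_sq (hν : ∑ x, ν x = 1) (c : α → ℝ) :
    ∑ ω : Fin N → α, (∏ t, ν (ω t)) * (∑ k, c (ω k)) ^ 2 =
      N * ∑ x, ν x * c x ^ 2 + ((N : ℝ) ^ 2 - N) * (∑ x, ν x * c x) ^ 2 := by
  calc ∑ ω : Fin N → α, (∏ t, ν (ω t)) * (∑ k, c (ω k)) ^ 2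
      = ∑ k, ∑ k', ∑ ω : Fin N → α, (∏ t, ν (ω t)) * (c (ω k) * c (ω k')) := by
        simp_rw [sq, sum_mul_sum, mul_sum]
        rw [sum_comm]
        simp_rw [sum_comm (γ := Fin N → α)]
    _ = _ := by
        simp_rw [sum_prod_mul_apply_mul_apply hν, sum_sum_ite_eq_add_mul, sq]

theorem sum_prod_mul_sum_apply (hν : ∑ x, ν x = 1) (c : α → ℝ) :
    ∑ ω : Fin N → α, (∏ t, ν (ω t)) * ∑ k, c (ω k) = N * ∑ x, ν x * c x := by
  simp_rw [mul_sum]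
  rw [sum_comm]
  simp [sum_prod_mul_apply hν, mul_sum]

theorem sum_prod_smul_empiricalMean (hν : ∑ x, ν x = 1) (hN : N ≠ 0) (f : α → ι → ℝ) :
    ∑ ω : Fin N → α, (∏ t, ν (ω t)) • empiricalMean N f ω = ∑ x, ν x • f x := by
  ext i
  simp only [empiricalMean, Finset.sum_apply, Pi.smul_apply, smul_eq_mul]
  simp_rw [mul_left_comm _ ((N : ℝ)⁻¹)]
  rw [← mul_sum, sum_prod_mul_sum_apply hν (fun x => f x i),
    inv_mul_cancel_left₀ (Nat.cast_ne_zero.2 hN)]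

theorem sum_prod_mul_sum_sq_empiricalMean [Fintype ι] (hν : ∑ x, ν x = 1) (hN : N ≠ 0)
    (f : α → ι → ℝ) :
    ∑ ω : Fin N → α, (∏ t, ν (ω t)) * ∑ i, empiricalMean N f ω i ^ 2 =
      (N : ℝ)⁻¹ * ∑ x, ν x * ∑ i, f x i ^ 2 +
        (1 - (N : ℝ)⁻¹) * ∑ i, (∑ x, ν x • f x) i ^ 2 := by
  have hcoord : ∀ i, ∑ ω : Fin N → α, (∏ t, ν (ω t)) * ((N : ℝ)⁻¹ * ∑ k, f (ω k) i) ^ 2 =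
      (N : ℝ)⁻¹ * ∑ x, ν x * f x i ^ 2 + (1 - (N : ℝ)⁻¹) * (∑ x, ν x * f x i) ^ 2 := fun i => by
    simp_rw [mul_pow, mul_left_comm _ ((N : ℝ)⁻¹ ^ 2)]
    rw [← mul_sum, sum_prod_mul_sum_sq hν (fun x => f x i)]
    field_simp
  simp only [empiricalMean, Pi.smul_apply, smul_eq_mul, Finset.sum_apply]
  conv_lhs => enter [2, ω]; rw [mul_sum]
  rw [sum_comm]
  simp only [hcoord, sum_add_distrib, ← mul_sum]
  rw [sum_comm]
  simp only [mul_sum]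

theorem le_of_forall_empiricalMean {κ : Type*} [Fintype ι] [Fintype κ] (hν₀ : ∀ x, 0 ≤ ν x)
    (hν : ∑ x, ν x = 1) (hN : N ≠ 0) (X : Matrix κ ι ℝ) (f : α → ι → ℝ) (θ : ℝ)
    (h : ∀ ω : Fin N → α,
      θ ^ 2 * ∑ i, empiricalMean N f ω i ^ 2 ≤ ∑ a, (X *ᵥ empiricalMean N f ω) a ^ 2) :
    θ ^ 2 * ((N : ℝ)⁻¹ * ∑ x, ν x * ∑ i, f x i ^ 2 +
        (1 - (N : ℝ)⁻¹) * ∑ i, (∑ x, ν x • f x) i ^ 2) ≤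
      (N : ℝ)⁻¹ * ∑ x, ν x * ∑ a, (X *ᵥ f x) a ^ 2 +
        (1 - (N : ℝ)⁻¹) * ∑ a, (X *ᵥ ∑ x, ν x • f x) a ^ 2 := by
  have hX : X *ᵥ ∑ x, ν x • f x = ∑ x, ν x • X *ᵥ f x := by
    simp only [Matrix.mulVec_sum, Matrix.mulVec_smul]
  rw [hX, ← sum_prod_mul_sum_sq_empiricalMean hν hN, ← sum_prod_mul_sum_sq_empiricalMean hν hN,
    mul_sum]
  refine sum_le_sum fun ω _ => ?_
  rw [mul_left_comm, ← mulVec_empiricalMean]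
  exact mul_le_mul_of_nonneg_left (h ω) (prod_nonneg fun t _ => hν₀ (ω t))

end Maurey

section CoordinateSampling

variable {ι : Type*} [Fintype ι]

noncomputable def coordProb (b : ι → ℝ) (i : ι) : ℝ := |b i| / ∑ j, |b j|

variable {b : ι → ℝ}

theorem sum_abs_pos_of_ne_zero (hb : b ≠ 0) : 0 < ∑ j, |b j| := by
  obtain ⟨i, hi⟩ := Function.ne_iff.1 hb
  exact (abs_pos.2 hi).trans_le (single_le_sum (fun j _ => abs_nonneg (b j)) (mem_univ i))

theorem coordProb_nonneg (i : ι) : 0 ≤ coordProb b i :=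
  div_nonneg (abs_nonneg _) (sum_nonneg fun j _ => abs_nonneg (b j))

theorem sum_coordProb (hb : b ≠ 0) : ∑ i, coordProb b i = 1 := by
  simp_rw [coordProb]
  rw [← sum_div, div_self (sum_abs_pos_of_ne_zero hb).ne']

variable [DecidableEq ι]

noncomputable def coordAtom (b : ι → ℝ) (i : ι) : ι → ℝ :=
  Pi.single i (SignType.sign (b i) * ∑ j, |b j|)

theorem sum_coordProb_smul_coordAtom (hb : b ≠ 0) : ∑ i, coordProb b i • coordAtom b i = b := by
  have hL := (sum_abs_pos_of_ne_zero hb).ne'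
  ext q
  simp [coordProb, coordAtom, Pi.single_apply]
  field_simp
  exact abs_mul_sign (b q)

theorem sum_coordProb_mul_sum_sq_coordAtom (hb : b ≠ 0) :
    ∑ i, coordProb b i * ∑ q, coordAtom b i q ^ 2 = (∑ j, |b j|) ^ 2 := by
  have hL := (sum_abs_pos_of_ne_zero hb).ne'
  have hsign : ∀ x : ℝ, (SignType.sign x : ℝ) ^ 2 * |x| = |x| := fun x => by
    rw [sq, mul_assoc, sign_mul_abs, sign_mul_self]
  simp only [coordProb, coordAtom, Pi.single_apply, ite_pow, zero_pow two_ne_zero, sum_ite_eq',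
    mem_univ, if_true]
  calc ∑ i, |b i| / (∑ j, |b j|) * (SignType.sign (b i) * ∑ j, |b j|) ^ 2
      = ∑ i, (∑ j, |b j|) * |b i| := sum_congr rfl fun i _ => by
        field_simp
        rw [mul_comm, hsign]
    _ = (∑ j, |b j|) ^ 2 := by rw [← mul_sum, sq]

theorem coordAtom_ne_zero {i q : ι} (h : coordAtom b i q ≠ 0) : q = i ∧ b q ≠ 0 := by
  by_cases hq : q = i
  · subst hq
    refine ⟨rfl, fun hb => h ?_⟩
    simp [coordAtom, hb]
  · simp [coordAtom, hq] at h

end CoordinateSampling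

section Mixture

variable {J ι : Type*} [Fintype J] [Fintype ι] (s0 : ℕ)

noncomputable def pieceWeight (b : ι → ℝ) : ℝ := √(s0 : ℝ) * √(∑ i, b i ^ 2) + ∑ i, |b i|

theorem pieceWeight_nonneg (b : ι → ℝ) : 0 ≤ pieceWeight s0 b :=
  add_nonneg (by positivity) (sum_nonneg fun i _ => abs_nonneg (b i))

@[simp]
theorem pieceWeight_zero : pieceWeight s0 (0 : ι → ℝ) = 0 := by
  simp [pieceWeight]

theorem pieceWeight_pos {b : ι → ℝ} (hb : b ≠ 0) : 0 < pieceWeight s0 b :=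
  add_pos_of_nonneg_of_pos (by positivity) (sum_abs_pos_of_ne_zero hb)

noncomputable def mixtureProb (b : J → ι → ℝ) (x : J × (Fin s0 → ι)) : ℝ :=
  pieceWeight s0 (b x.1) / (∑ j, pieceWeight s0 (b j)) * ∏ l, coordProb (b x.1) (x.2 l)

-- For `b j = 0` the scale factor divides by `pieceWeight s0 0 = 0`; that junk value is harmless
-- because `mixtureProb` vanishes on the piece.
noncomputable def mixtureAtom [DecidableEq ι] (b : J → ι → ℝ) (x : J × (Fin s0 → ι)) : ι → ℝ :=
  ((∑ j, pieceWeight s0 (b j)) / pieceWeight s0 (b x.1)) •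
    empiricalMean s0 (coordAtom (b x.1)) x.2

variable {s0}

/-- The ℓ¹ term of the variance identity is paid for by `‖b‖₁`, the ℓ² term by `√s0 ‖b‖₂`. -/
theorem variance_le_pieceWeight_sq (hs0 : s0 ≠ 0) (b : ι → ℝ) :
    (s0 : ℝ)⁻¹ * (∑ i, |b i|) ^ 2 + (1 - (s0 : ℝ)⁻¹) * ∑ i, b i ^ 2 ≤
      pieceWeight s0 b ^ 2 / s0 := by
  have hs0' : (0 : ℝ) < s0 := Nat.cast_pos.2 (Nat.pos_of_ne_zero hs0)
  have hS : 0 ≤ ∑ i, b i ^ 2 := sum_nonneg fun i _ => sq_nonneg (b i)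
  have hL : 0 ≤ ∑ i, |b i| := sum_nonneg fun i _ => abs_nonneg (b i)
  rw [pieceWeight, add_sq, mul_pow, Real.sq_sqrt hs0'.le, Real.sq_sqrt hS]
  field_simp
  nlinarith [mul_nonneg (mul_nonneg hL (Real.sqrt_nonneg (s0 : ℝ)))
    (Real.sqrt_nonneg (∑ i, b i ^ 2))]

theorem sum_pieceWeight_pos {b : J → ι → ℝ} (hb : b ≠ 0) : 0 < ∑ j, pieceWeight s0 (b j) := by
  obtain ⟨j, hj⟩ := Function.ne_iff.1 hb
  exact (pieceWeight_pos s0 hj).trans_le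
    (single_le_sum (fun j _ => pieceWeight_nonneg s0 (b j)) (mem_univ j))

theorem mixtureProb_nonneg (b : J → ι → ℝ) (x : J × (Fin s0 → ι)) : 0 ≤ mixtureProb s0 b x :=
  mul_nonneg (div_nonneg (pieceWeight_nonneg s0 _) (sum_nonneg fun _ _ => pieceWeight_nonneg s0 _))
    (prod_nonneg fun _ _ => coordProb_nonneg _)

theorem sum_mixtureProb {b : J → ι → ℝ} (hb : b ≠ 0) : ∑ x, mixtureProb s0 b x = 1 := by
  have hpiece : ∀ j, ∑ c : Fin s0 → ι, mixtureProb s0 b (j, c) =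
      pieceWeight s0 (b j) / ∑ j, pieceWeight s0 (b j) := fun j => by
    rcases eq_or_ne (b j) 0 with hbj | hbj
    · simp [mixtureProb, hbj]
    · simp only [mixtureProb]
      rw [← mul_sum, ← Fintype.prod_sum (fun _ i => coordProb (b j) i), sum_coordProb hbj,
        prod_const_one, mul_one]
  rw [Fintype.sum_prod_type]
  simp only [hpiece]
  rw [← sum_div, div_self (sum_pieceWeight_pos hb).ne']

variable [DecidableEq ι]

theorem sum_mixtureProb_smul_mixtureAtom (hs0 : s0 ≠ 0) (b : J → ι → ℝ) :
    ∑ x, mixtureProb s0 b x • mixtureAtom s0 b x = ∑ j, b j := by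
  rw [Fintype.sum_prod_type]
  refine sum_congr rfl fun j _ => ?_
  rcases eq_or_ne (b j) 0 with hbj | hbj
  · simp [mixtureProb, hbj]
  have hw := (pieceWeight_pos s0 hbj).ne'
  have hW := (sum_pieceWeight_pos (s0 := s0) fun h => hbj (congrFun h j)).ne'
  have hterm : ∀ c, mixtureProb s0 b (j, c) • mixtureAtom s0 b (j, c) =
      (∏ l, coordProb (b j) (c l)) • empiricalMean s0 (coordAtom (b j)) c := fun c => by
    simp only [mixtureProb, mixtureAtom, smul_smul]
    congr 1
    field_simp
  simp only [hterm]
  rw [sum_prod_smul_empiricalMean (sum_coordProb hbj) hs0, sum_coordProb_smul_coordAtom hbj]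

theorem sum_mixtureProb_mul_sum_sq_mixtureAtom_le (hs0 : s0 ≠ 0) (b : J → ι → ℝ) :
    ∑ x, mixtureProb s0 b x * ∑ i, mixtureAtom s0 b x i ^ 2 ≤
      (∑ j, pieceWeight s0 (b j)) ^ 2 / s0 := by
  have hpiece : ∀ j,
      ∑ c : Fin s0 → ι, mixtureProb s0 b (j, c) * ∑ i, mixtureAtom s0 b (j, c) i ^ 2 ≤
        (∑ j, pieceWeight s0 (b j)) * pieceWeight s0 (b j) / s0 := by
    intro j
    rcases eq_or_ne (b j) 0 with hbj | hbj
    · simp [mixtureProb, hbj]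
    have hw : 0 < pieceWeight s0 (b j) := pieceWeight_pos s0 hbj
    have hW : 0 < ∑ j, pieceWeight s0 (b j) := sum_pieceWeight_pos fun h => hbj (congrFun h j)
    have hterm : ∀ c, mixtureProb s0 b (j, c) * ∑ i, mixtureAtom s0 b (j, c) i ^ 2 =
        (∑ j, pieceWeight s0 (b j)) / pieceWeight s0 (b j) *
          ((∏ l, coordProb (b j) (c l)) * ∑ i, empiricalMean s0 (coordAtom (b j)) c i ^ 2) :=
      fun c => by
        simp only [mixtureProb, mixtureAtom, Pi.smul_apply, smul_eq_mul, mul_pow, ← mul_sum]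
        field_simp
    simp only [hterm]
    rw [← mul_sum, sum_prod_mul_sum_sq_empiricalMean (sum_coordProb hbj) hs0,
      sum_coordProb_smul_coordAtom hbj, sum_coordProb_mul_sum_sq_coordAtom hbj]
    calc (∑ j, pieceWeight s0 (b j)) / pieceWeight s0 (b j) *
          ((s0 : ℝ)⁻¹ * (∑ i, |b j i|) ^ 2 + (1 - (s0 : ℝ)⁻¹) * ∑ i, b j i ^ 2)
        ≤ (∑ j, pieceWeight s0 (b j)) / pieceWeight s0 (b j) * (pieceWeight s0 (b j) ^ 2 / s0) :=
          mul_le_mul_of_nonneg_left (variance_le_pieceWeight_sq hs0 (b j)) (by positivity)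
      _ = (∑ j, pieceWeight s0 (b j)) * pieceWeight s0 (b j) / s0 := by field_simp
  calc ∑ x, mixtureProb s0 b x * ∑ i, mixtureAtom s0 b x i ^ 2
      ≤ ∑ j, (∑ j, pieceWeight s0 (b j)) * pieceWeight s0 (b j) / s0 := by
        rw [Fintype.sum_prod_type]
        exact sum_le_sum fun j _ => hpiece j
    _ = (∑ j, pieceWeight s0 (b j)) ^ 2 / s0 := by rw [← sum_div, ← mul_sum, sq]

theorem mixtureAtom_ne_zero {b : J → ι → ℝ} {x : J × (Fin s0 → ι)} {i : ι}
    (h : mixtureAtom s0 b x i ≠ 0) : (∃ l, x.2 l = i) ∧ b x.1 i ≠ 0 := by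
  simp only [mixtureAtom, Pi.smul_apply, smul_eq_mul] at h
  obtain ⟨l, hl⟩ := exists_ne_zero_of_empiricalMean_ne_zero (right_ne_zero_of_mul h)
  obtain ⟨rfl, hb⟩ := coordAtom_ne_zero hl
  exact ⟨⟨l, rfl⟩, hb⟩

theorem card_support_mixtureAtom_le (b : J → ι → ℝ) (x : J × (Fin s0 → ι))
    [DecidablePred fun i => mixtureAtom s0 b x i ≠ 0] :
    #{i | mixtureAtom s0 b x i ≠ 0} ≤ s0 := by
  refine (card_le_card_of_surjOn (s := univ) x.2 fun i hi => ?_).trans (by simp)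
  obtain ⟨l, hl⟩ := (mixtureAtom_ne_zero (mem_filter.1 (mem_coe.1 hi)).2).1
  exact ⟨l, mem_coe.2 (mem_univ l), hl⟩

theorem card_support_empiricalMean_mixtureAtom_le {N : ℕ} (b : J → ι → ℝ)
    (ω : Fin N → J × (Fin s0 → ι))
    [DecidablePred fun i => empiricalMean N (mixtureAtom s0 b) ω i ≠ 0] :
    #{i | empiricalMean N (mixtureAtom s0 b) ω i ≠ 0} ≤ N * s0 := by
  refine (card_le_card_of_surjOn (s := univ) (fun tl : Fin N × Fin s0 => (ω tl.1).2 tl.2)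
    fun i hi => ?_).trans (by simp)
  obtain ⟨t, ht⟩ := exists_ne_zero_of_empiricalMean_ne_zero (mem_filter.1 (mem_coe.1 hi)).2
  obtain ⟨l, hl⟩ := (mixtureAtom_ne_zero ht).1
  exact ⟨(t, l), mem_coe.2 (mem_univ _), hl⟩

end Mixture

theorem half_mul_le_of_moment_bounds {s θ A₁ A₂ Q₁ Q₂ : ℝ} (hs : 2 ≤ s)
    (hmoment : θ ^ 2 * (s⁻¹ * A₂ + (1 - s⁻¹) * Q₂) ≤ s⁻¹ * A₁ + (1 - s⁻¹) * Q₁)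
    (hA : A₁ ≤ A₂) (hA₂₀ : 0 ≤ A₂) (hA₂ : A₂ ≤ (s - 1) / 2 * θ ^ 2 * Q₂) :
    θ ^ 2 / 2 * Q₂ ≤ Q₁ := by
  have ht : 0 < s⁻¹ := by positivity
  have ht' : s⁻¹ * (s - 1) = 1 - s⁻¹ := by field_simp
  have h1 : 0 < 1 - s⁻¹ := by rw [← ht']; exact mul_pos ht (by linarith)
  have h2 : (1 - s⁻¹) * (θ ^ 2 * Q₂) ≤ (1 - s⁻¹) * (θ ^ 2 * Q₂) / 2 + (1 - s⁻¹) * Q₁ := by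
    nlinarith [mul_le_mul_of_nonneg_left (hA.trans hA₂) ht.le,
      mul_nonneg (mul_nonneg (sq_nonneg θ) ht.le) hA₂₀]
  nlinarith

section GroupSparse

variable {J K : Type*} [DecidableEq J]

def groupPart (β : J × K → ℝ) (j : J) : J × K → ℝ := fun q => if q.1 = j then β q else 0

theorem groupPart_ne_zero {β : J × K → ℝ} {j : J} {q : J × K} (h : groupPart β j q ≠ 0) :
    q.1 = j := by
  by_contra hq
  exact h (if_neg hq)

variable [Fintype J]

theorem sum_groupPart (β : J × K → ℝ) : ∑ j, groupPart β j = β := by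
  ext q
  simp [groupPart, Finset.sum_apply]

variable [Fintype K]

theorem sum_groupPart_apply (β : J × K → ℝ) {f : ℝ → ℝ} (hf : f 0 = 0) (j : J) :
    ∑ q, f (groupPart β j q) = ∑ k, f (β (j, k)) := by
  rw [Fintype.sum_prod_type, sum_eq_single j (fun j' _ hj' => by simp [groupPart, hj', hf])
    (by simp)]
  simp [groupPart]

theorem sum_pieceWeight_groupPart (s0 : ℕ) (β : J × K → ℝ) :
    ∑ j, pieceWeight s0 (groupPart β j) =
      ∑ j, (√(s0 : ℝ) * √(∑ k, β (j, k) ^ 2) + ∑ k, |β (j, k)|) := by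
  simp only [pieceWeight, sum_groupPart_apply β (f := (· ^ 2)) (zero_pow two_ne_zero),
    sum_groupPart_apply β abs_zero]

variable [DecidableEq K] {s0 N : ℕ}

theorem mixtureAtom_groupPart_ne_zero {β : J × K → ℝ} {x : J × (Fin s0 → J × K)} {q : J × K}
    (h : mixtureAtom s0 (groupPart β) x q ≠ 0) : q.1 = x.1 :=
  groupPart_ne_zero (mixtureAtom_ne_zero h).2

theorem card_groups_empiricalMean_le (β : J × K → ℝ) (ω : Fin N → J × (Fin s0 → J × K))
    [DecidablePred fun j => ∃ k, empiricalMean N (mixtureAtom s0 (groupPart β)) ω (j, k) ≠ 0] :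
    #{j | ∃ k, empiricalMean N (mixtureAtom s0 (groupPart β)) ω (j, k) ≠ 0} ≤ N := by
  refine (card_le_card_of_surjOn (s := univ) (fun t => (ω t).1) fun j hj => ?_).trans (by simp)
  obtain ⟨k, hk⟩ := (mem_filter.1 (mem_coe.1 hj)).2
  obtain ⟨t, ht⟩ := exists_ne_zero_of_empiricalMean_ne_zero hk
  exact ⟨t, mem_coe.2 (mem_univ t), (mixtureAtom_groupPart_ne_zero ht).symm⟩

end GroupSparse

open Classical in
theorem stmt13_general (n m d s s0 : ℕ) (hs : 2 ≤ s) (hs0 : 1 ≤ s0)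
    (θ : ℝ)
    (X : Matrix (Fin n) (Fin m × Fin d) ℝ)
    (hDSRE : ∀ β : Fin m × Fin d → ℝ,
      (Finset.univ.filter (fun j : Fin m => ∃ i, β (j, i) ≠ 0)).card ≤ s →
      (Finset.univ.filter (fun q : Fin m × Fin d => β q ≠ 0)).card ≤ s * s0 →
      θ^2 * ∑ q, (β q)^2 ≤ ∑ a, (X.mulVec β a)^2)
    (hnorm : ∀ (j : Fin m) (v : Fin m × Fin d → ℝ),
      (∀ j' i, v (j', i) ≠ 0 → j' = j) →
      (Finset.univ.filter (fun q : Fin m × Fin d => v q ≠ 0)).card ≤ s0 →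
      ∑ a, (X.mulVec v a)^2 ≤ ∑ q, (v q)^2)
    (β : Fin m × Fin d → ℝ)
    (hW : (∑ j, (Real.sqrt s0 * Real.sqrt (∑ i, (β (j, i))^2) + ∑ i, |β (j, i)|))^2
            ≤ ((s0 : ℝ) * ((s : ℝ) - 1) / 2) * θ^2 * ∑ q, (β q)^2) :
    θ^2 / 2 * ∑ q, (β q)^2 ≤ ∑ a, (X.mulVec β a)^2 := by
  rcases eq_or_ne β 0 with rfl | hβ
  · simp
  have hb : groupPart β ≠ 0 := fun h => hβ (by rw [← sum_groupPart β, h]; simp)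
  have hs0' : s0 ≠ 0 := by omega
  have hmoment := le_of_forall_empiricalMean (N := s) (mixtureProb_nonneg _) (sum_mixtureProb hb)
    (by omega) X (mixtureAtom s0 (groupPart β)) θ fun ω =>
      hDSRE _ (card_groups_empiricalMean_le β ω) (card_support_empiricalMean_mixtureAtom_le _ ω)
  rw [sum_mixtureProb_smul_mixtureAtom hs0' _, sum_groupPart] at hmoment
  refine half_mul_le_of_moment_bounds (by exact_mod_cast hs) hmoment ?_ ?_ ?_
  · exact sum_le_sum fun x _ => mul_le_mul_of_nonneg_left
      (hnorm x.1 _ (fun _ _ h => mixtureAtom_groupPart_ne_zero h) (card_support_mixtureAtom_le _ x))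
      (mixtureProb_nonneg _ x)
  · exact sum_nonneg fun x _ =>
      mul_nonneg (mixtureProb_nonneg _ x) (sum_nonneg fun i _ => sq_nonneg _)
  · have hs0pos : (0 : ℝ) < s0 := by exact_mod_cast hs0
    refine (sum_mixtureProb_mul_sum_sq_mixtureAtom_le hs0' _).trans ?_
    rw [sum_pieceWeight_groupPart, div_le_iff₀ hs0pos]
    linarith

open Classical in
/-- If `X` satisfies the double sparse restricted eigenvalue condition with constant `θ`
and the sparse group normalization condition, then for every `β` whose mixed weight
`W = ∑_j (√s0 ‖β_{G_j}‖₂ + ‖β_{G_j}‖₁)` satisfies `W² ≤ (s0 (s-1)/2) θ² ‖β‖₂²`,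
one has `‖Xβ‖₂² ≥ (θ²/2) ‖β‖₂²`. -/
theorem stmt13 (n m d s s0 : ℕ) (hs : 2 ≤ s) (hsm : s ≤ m) (hs0 : 1 ≤ s0) (hs0d : s0 ≤ d)
    (θ : ℝ) (hθ : 0 < θ)
    (X : Matrix (Fin n) (Fin m × Fin d) ℝ)
    (hDSRE : ∀ β : Fin m × Fin d → ℝ,
      (Finset.univ.filter (fun j : Fin m => ∃ i, β (j, i) ≠ 0)).card ≤ s →
      (Finset.univ.filter (fun q : Fin m × Fin d => β q ≠ 0)).card ≤ s * s0 →
      θ^2 * ∑ q, (β q)^2 ≤ ∑ a, (X.mulVec β a)^2)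
    (hnorm : ∀ (j : Fin m) (v : Fin m × Fin d → ℝ),
      (∀ j' i, v (j', i) ≠ 0 → j' = j) →
      (Finset.univ.filter (fun q : Fin m × Fin d => v q ≠ 0)).card ≤ s0 →
      ∑ a, (X.mulVec v a)^2 ≤ ∑ q, (v q)^2)
    (β : Fin m × Fin d → ℝ)
    (hW : (∑ j, (Real.sqrt s0 * Real.sqrt (∑ i, (β (j, i))^2) + ∑ i, |β (j, i)|))^2
            ≤ ((s0 : ℝ) * ((s : ℝ) - 1) / 2) * θ^2 * ∑ q, (β q)^2) :
    θ^2 / 2 * ∑ q, (β q)^2 ≤ ∑ a, (X.mulVec β a)^2 :=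
  stmt13_general n m d s s0 hs hs0 θ X hDSRE hnorm β hW
end
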